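/- arXiv:math/0611659 — 3 statements merged into one kernel-verified Lean document; each statement's English description precedes it below -/
import Mathlib

section
/- Let y be an indeterminate, u a parameter, and define the operator D = (y^3/(1-uy)) · ∂/∂y acting on formal Laurent series in u with rational-function coefficients in y. Then for every integer i ≥ 1, applying D i times to y/(1-uy) yields (2i-1)!! · (y/(1-uy))^{2i+1}. -/
/- We work with formal power series in `u` whose coefficients are polynomials
(in particular rational functions) in `y`.  The series
`Y(u) = y/(1-uy) = ∑_{k≥0} y^{k+1} u^k` and `y^3/(1-uy) = ∑_{k≥0} y^{k+3} u^k`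
are represented by their expansions. -/

/-- `Y(u) = y/(1-uy) = ∑_{k≥0} y^{k+1} u^k`. -/
noncomputable def Yu : PowerSeries (Polynomial ℚ) :=
  PowerSeries.mk fun k => Polynomial.X ^ (k + 1)

/-- The partial derivative `∂/∂y`, acting coefficientwise in `u`. -/
noncomputable def dYpartial (f : PowerSeries (Polynomial ℚ)) :
    PowerSeries (Polynomial ℚ) :=
  PowerSeries.mk fun k => Polynomial.derivative (PowerSeries.coeff k f)

/-- The operator `D = (y^3/(1-uy)) · ∂/∂y`, where
`y^3/(1-uy) = ∑_{k≥0} y^{k+3} u^k`. -/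
noncomputable def Dop (f : PowerSeries (Polynomial ℚ)) :
    PowerSeries (Polynomial ℚ) :=
  (PowerSeries.mk fun k => Polynomial.X ^ (k + 3)) * dYpartial f

/-! Since `Y = y/(1-uy)` has `∂Y/∂y = 1/(1-uy)² = Y²/y²`, the operator is `D = y² Y ∂/∂y`, and
because `∂/∂y` is a derivation, `D(Yⁿ) = n Y^(n-1) · y² Y ∂Y/∂y = n Yⁿ⁺²`. Starting from `Y`, each
application of `D` raises the exponent by two and multiplies by the old odd exponent. -/

open PowerSeries
open scoped Polynomial

theorem dYpartial_add (f g : PowerSeries ℚ[X]) :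
    dYpartial (f + g) = dYpartial f + dYpartial g := by
  ext k : 1
  simp only [dYpartial, coeff_mk, map_add]

theorem dYpartial_smul (c : ℚ) (f : PowerSeries ℚ[X]) :
    dYpartial (c • f) = c • dYpartial f := by
  ext k : 1
  simp only [dYpartial, coeff_mk, coeff_smul, Polynomial.derivative_smul]

theorem dYpartial_mul (f g : PowerSeries ℚ[X]) :
    dYpartial (f * g) = dYpartial f * g + f * dYpartial g := by
  ext k : 1
  simp only [dYpartial, coeff_mk, coeff_mul, map_add, map_sum, Polynomial.derivative_mul,
    Finset.sum_add_distrib]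

noncomputable def dYpartialDerivation :
    Derivation ℚ (PowerSeries ℚ[X]) (PowerSeries ℚ[X]) :=
  Derivation.mk' ⟨⟨dYpartial, dYpartial_add⟩, dYpartial_smul⟩ fun f g => by
    rw [LinearMap.coe_mk, AddHom.coe_mk, dYpartial_mul, smul_eq_mul, smul_eq_mul, add_comm,
      mul_comm g]

theorem dYpartialDerivation_apply (f : PowerSeries ℚ[X]) :
    dYpartialDerivation f = dYpartial f :=
  rfl

theorem Dop_eq_mul_dYpartial (f : PowerSeries ℚ[X]) :
    Dop f = C ((Polynomial.X : ℚ[X]) ^ 2) * Yu * dYpartial f := by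
  rw [Dop]
  congr 1
  ext k : 1
  rw [coeff_mk, coeff_C_mul, Yu, coeff_mk]
  ring

theorem Dop_natCast_mul (n : ℕ) (f : PowerSeries ℚ[X]) : Dop (n * f) = n * Dop f := by
  rw [Dop_eq_mul_dYpartial, Dop_eq_mul_dYpartial, ← nsmul_eq_mul, ← dYpartialDerivation_apply,
    map_nsmul, dYpartialDerivation_apply, mul_smul_comm, nsmul_eq_mul]

theorem coeff_Yu_sq (k : ℕ) :
    coeff k (Yu ^ 2) = ((k + 1 : ℕ) : ℚ[X]) * Polynomial.X ^ (k + 2) := by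
  have hterm : ∀ p : ℕ × ℕ, p ∈ Finset.HasAntidiagonal.antidiagonal k →
      coeff p.1 Yu * coeff p.2 Yu = (Polynomial.X : ℚ[X]) ^ (k + 2) := by
    rintro ⟨a, b⟩ hab
    rw [Finset.HasAntidiagonal.mem_antidiagonal] at hab
    simp only [Yu, coeff_mk, ← pow_add]
    congr 1
    omega
  rw [sq, coeff_mul, Finset.sum_congr rfl hterm, Finset.sum_const,
    Finset.Nat.card_antidiagonal, nsmul_eq_mul]

theorem C_X_sq_mul_dYpartial_Yu : C ((Polynomial.X : ℚ[X]) ^ 2) * dYpartial Yu = Yu ^ 2 := by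
  ext k : 1
  rw [coeff_C_mul, coeff_Yu_sq, dYpartial, coeff_mk, Yu, coeff_mk, Polynomial.derivative_X_pow,
    Polynomial.C_eq_natCast, Nat.add_sub_cancel]
  ring

theorem Dop_Yu_pow (n : ℕ) : Dop (Yu ^ n) = n * Yu ^ (n + 2) := by
  cases n with
  | zero =>
    rw [pow_zero, Dop_eq_mul_dYpartial, ← dYpartialDerivation_apply, Derivation.map_one_eq_zero,
      mul_zero, Nat.cast_zero, zero_mul]
  | succ n =>
    rw [Dop_eq_mul_dYpartial, ← dYpartialDerivation_apply, Derivation.leibniz_pow,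
      dYpartialDerivation_apply, Nat.add_sub_cancel, smul_eq_mul, nsmul_eq_mul]
    linear_combination ((n + 1 : ℕ) * Yu ^ (n + 1) : PowerSeries ℚ[X]) * C_X_sq_mul_dYpartial_Yu

theorem Dop_iterate_general (i : ℕ) :
    Dop^[i] Yu =
      ((∏ j ∈ Finset.range i, (2 * j + 1) : ℕ) : PowerSeries (Polynomial ℚ)) *
        Yu ^ (2 * i + 1) := by
  induction i with
  | zero => simp
  | succ i ih =>
    rw [Function.iterate_succ_apply', ih, Dop_natCast_mul, Dop_Yu_pow, Finset.prod_range_succ]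
    push_cast
    ring

/-- For every `i ≥ 1`,
`D^i (y/(1-uy)) = (2i-1)!! · (y/(1-uy))^{2i+1}`, where
`(2i-1)!! = ∏_{j<i} (2j+1) = 1·3·5⋯(2i-1)`. -/
theorem Dop_iterate (i : ℕ) (hi : 1 ≤ i) :
    Dop^[i] Yu =
      ((∏ j ∈ Finset.range i, (2 * j + 1) : ℕ) : PowerSeries (Polynomial ℚ)) *
        Yu ^ (2 * i + 1) :=
  Dop_iterate_general i
end

section
/- Invertibility of the operator Δ_k: for m ≥ 1 and k ≥ 2, let Δ_k = Σ_{i=1}^m y_i^k ∂/∂y_i act on formal power series in y_1,…,y_m over Q in which every monomial has positive exponent in each of y_1,…,y_m. If A and B are two such series with Δ_k A = Δ_k B, then A = B. -/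
/- A formal power series in `y_1,…,y_m` over `ℚ` is represented by its
coefficient function `c : (Fin m → ℕ) → ℚ` (the coefficient of the monomial
`y_1^{e 0} ⋯ y_m^{e (m-1)}` is `c e`). -/

/-- The operator `Δ_k = ∑_{i=1}^m y_i^k ∂/∂y_i`, at the level of coefficient
functions: the coefficient of `y^e` in `Δ_k c` is
`∑_i (e_i - (k-1)) · c(e - (k-1)δ_i)` (terms with `e_i < k-1` vanish). -/
def Delta (m k : ℕ) (c : (Fin m → ℕ) → ℚ) : (Fin m → ℕ) → ℚ :=
  fun e => ∑ i, if k - 1 ≤ e i then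
    ((e i - (k - 1) : ℕ) : ℚ) * c (Function.update e i (e i - (k - 1))) else 0

/-- **invertibility of `Δ_k`.** For `m ≥ 1` and `k ≥ 2`, the
operator `Δ_k = ∑_i y_i^k ∂/∂y_i` is injective on formal power series in
`y_1,…,y_m` over `ℚ` in which every monomial has positive exponent in each of
`y_1,…,y_m`: if `Δ_k A = Δ_k B` for two such series then `A = B`. -/
theorem Delta_injective (m k : ℕ) (hm : 1 ≤ m) (hk : 2 ≤ k)
    (A B : (Fin m → ℕ) → ℚ)
    (hA : ∀ e, A e ≠ 0 → ∀ i, 1 ≤ e i)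
    (hB : ∀ e, B e ≠ 0 → ∀ i, 1 ≤ e i)
    (h : Delta m k A = Delta m k B) : A = B := by
  set C : (Fin m → ℕ) → ℚ := fun e => A e - B e with hCdef
  have hC0 : ∀ e, Delta m k C e = 0 := by
    intro e
    have : Delta m k C e = Delta m k A e - Delta m k B e := by
      simp only [Delta, hCdef, ← Finset.sum_sub_distrib]
      refine Finset.sum_congr rfl fun i _ => ?_
      split <;> ring
    rw [this, h, sub_self]
  have hCpos : ∀ e, C e ≠ 0 → ∀ i, 1 ≤ e i := by
    intro e he i
    rcases ne_or_eq (A e) 0 with hA' | hA'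
    · exact hA e hA' i
    · have : B e ≠ 0 := by
        intro hB'
        apply he; simp [hCdef, hA', hB']
      exact hB e this i
  have hsupsum : ∀ g : Fin m → ℕ, Finset.univ.sup g ≤ ∑ j, g j := by
    intro g
    exact Finset.sup_le fun j _ =>
      Finset.single_le_sum (fun _ _ => Nat.zero_le _) (Finset.mem_univ j)
  have main : ∀ N : ℕ, ∀ e : Fin m → ℕ,
      (∑ j, e j) - Finset.univ.sup e = N → C e = 0 := by
    intro N
    induction N using Nat.strong_induction_on with
    | _ N ih =>
      intro e hN
      by_contra hCe
      have hpos := hCpos e hCe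
      haveI : Nonempty (Fin m) := ⟨⟨0, hm⟩⟩
      obtain ⟨i, hi⟩ := Finite.exists_max e
      set f : Fin m → ℕ := Function.update e i (e i + (k - 1)) with hfdef
      have hsup : Finset.univ.sup e = e i :=
        le_antisymm (Finset.sup_le fun j _ => hi j) (Finset.le_sup (Finset.mem_univ i))
      have hfi : f i = e i + (k - 1) := by simp [hfdef]
      have hfj : ∀ j, j ≠ i → f j = e j := by
        intro j hj; simp [hfdef, Function.update_of_ne hj]
      have hf := hC0 f
      rw [Delta] at hf
      rw [Finset.sum_eq_single i ?_ (by simp)] at hf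
      · rw [if_pos (by omega : k - 1 ≤ f i)] at hf
        have hfi' : f i - (k - 1) = e i := by omega
        rw [hfi'] at hf
        have hupd : Function.update f i (e i) = e := by
          simp [hfdef, Function.update_idem]
        rw [hupd] at hf
        have h1 : (1 : ℕ) ≤ e i := hpos i
        rcases mul_eq_zero.mp hf with h' | h'
        · exact absurd h' (by exact_mod_cast Nat.one_le_iff_ne_zero.mp h1)
        · exact hCe h'
      · -- all other terms vanish
        intro j _ hj
        by_cases hcond : k - 1 ≤ f j
        · rw [if_pos hcond]
          have hfje : f j = e j := hfj j hj
          set e' : Fin m → ℕ := Function.update f j (f j - (k - 1)) with he'def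
          -- sum decompositions
          have hiej : i ∈ (Finset.univ : Finset (Fin m)).erase j :=
            Finset.mem_erase.mpr ⟨Ne.symm hj, Finset.mem_univ i⟩
          have hSdec : ∑ x, e x = e j + (e i + ∑ x ∈ ((Finset.univ.erase j).erase i), e x) := by
            rw [Finset.add_sum_erase _ e hiej, Finset.add_sum_erase _ e (Finset.mem_univ j)]
          have hS'1 : ∑ x, e' x = (f j - (k - 1)) + ∑ x ∈ Finset.univ.erase j, f x := by
            rw [he'def, Finset.sum_update_of_mem (Finset.mem_univ j), Finset.sdiff_singleton_eq_erase]
          have hS'2 : ∑ x ∈ Finset.univ.erase j, f x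
              = (e i + (k - 1)) + ∑ x ∈ ((Finset.univ.erase j).erase i), e x := by
            rw [hfdef, Finset.sum_update_of_mem hiej, Finset.sdiff_singleton_eq_erase]
          have hsum' : ∑ x, e' x = ∑ x, e x := by
            rw [hS'1, hS'2, hSdec]; omega
          have hsup'ge : e i + (k - 1) ≤ Finset.univ.sup e' := by
            have : e' i = e i + (k - 1) := by
              rw [he'def, Function.update_of_ne (Ne.symm hj), hfi]
            calc e i + (k - 1) = e' i := this.symm
              _ ≤ _ := Finset.le_sup (Finset.mem_univ i)
          have hsup'le := hsupsum e'
          have hmeas : (∑ x, e' x) - Finset.univ.sup e' < N := by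
            have hSj : k - 1 ≤ e j := by omega
            have hSge : e j + e i ≤ ∑ x, e x := by omega
            omega
          rw [ih _ hmeas e' rfl, mul_zero]
        · rw [if_neg hcond]
  have : ∀ e, C e = 0 := fun e => main _ e rfl
  funext e
  have := this e
  simp only [hCdef] at this
  linarith
end

section
/- Convolution identity for tree-type series: let y(x) = Σ_{n≥0} n^n x^n/n! and for indeterminates V_1, V_2 define y(V_i) accordingly. Then Σ_{j,k ≥ 1} (1/(j+k)) (j^{j+1}/j!) V_1^j (k^k/k!) V_2^k = V_2/(V_2 - V_1) - y(V_1)^2 (y(V_2) - 1)/(y(V_2) - y(V_1)), as an identity of formal power series in V_1 and V_2 (the right side expanded in the ordered Laurent sense with V_1 ≺ V_2). -/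
/- We work in `ℚ[[V_1]][[V_2]]`, bivariate formal power series: the outer
variable is `V_2` and coefficients are formal power series in `V_1`. -/

/-- `y(V) = ∑_{n≥0} n^n V^n / n! = 1/(1-w(V))`, where `w` is the tree series. -/
noncomputable def ySer : PowerSeries ℚ :=
  PowerSeries.mk fun n => (n : ℚ) ^ n / (Nat.factorial n : ℚ)

/-- `V_1`, viewed in `ℚ[[V_1]][[V_2]]`. -/
noncomputable def V1 : PowerSeries (PowerSeries ℚ) :=
  PowerSeries.C PowerSeries.X

/-- `V_2`, viewed in `ℚ[[V_1]][[V_2]]`. -/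
noncomputable def V2 : PowerSeries (PowerSeries ℚ) := PowerSeries.X

/-- `y(V_1)`, viewed in `ℚ[[V_1]][[V_2]]`. -/
noncomputable def yV1 : PowerSeries (PowerSeries ℚ) :=
  PowerSeries.C ySer

/-- `y(V_2)`, viewed in `ℚ[[V_1]][[V_2]]`. -/
noncomputable def yV2 : PowerSeries (PowerSeries ℚ) :=
  PowerSeries.map PowerSeries.C ySer

/-- The double series `S = ∑_{j,k≥1} (1/(j+k)) (j^{j+1}/j!) V_1^j (k^k/k!) V_2^k`. -/
noncomputable def Sser : PowerSeries (PowerSeries ℚ) :=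
  PowerSeries.mk fun k =>
    if k = 0 then 0 else
      PowerSeries.mk fun j =>
        if j = 0 then 0 else
          (1 / ((j : ℚ) + (k : ℚ))) * ((j : ℚ) ^ (j + 1) / (Nat.factorial j : ℚ)) *
            ((k : ℚ) ^ k / (Nat.factorial k : ℚ))

/-!
Let `E = V₁∂₁ + V₂∂₂` be the Euler operator for total degree on `ℚ[[V₁]][[V₂]]`: it multiplies
the coefficient of `V₁^p V₂^q` by `p + q`, so `E S = (θy)(V₁) (y(V₂) - 1)` with `θ = V d/dV`.
For the tree series `w = ∑ n^(n-1) Vⁿ / n!` one has `θw = y - 1`, and `y (1 - w) = 1` is the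
coefficient identity `∑_{j<n} C(n,j) j^j (n-j)^(n-j-1) = n^n`, a case of Abel's identity; together
they give `θy = y² (y - 1)`. With these rules, the defect `H` of the cleared identity satisfies
`E H = (2 + ψ) H` with `ψ(0,0) = 0`. Comparing coefficients, `(p + q - 2) H_{pq}` is a combination
of coefficients of `H` of lower total degree, so `H = 0` as soon as its three coefficients of total
degree 2 vanish, which is a direct computation.
-/

open Finset

section Abel

open Polynomial

variable {R : Type*} [CommRing R]

theorem alternating_sum_choose_mul_pow_eq_zero {n j : ℕ} (h : j < n) :
    ∑ k ∈ range (n + 1), (-1 : R) ^ k * n.choose k * ((n - k : ℕ) : R) ^ j = 0 := by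
  have hΔ := congrFun (fwdDiff_iter_pow_eq_zero_of_lt (R := R) h) 0
  rw [fwdDiff_iter_eq_sum_shift, ← sum_range_reflect, Pi.zero_apply] at hΔ
  rw [← hΔ]
  refine sum_congr rfl fun k hk => ?_
  have hk : k ≤ n := Nat.lt_succ_iff.mp (mem_range.mp hk)
  rw [Nat.add_sub_cancel, Nat.sub_sub_self hk, Nat.choose_symm hk]
  simp [zsmul_eq_mul]

/-- `∂/∂x` at `x = 0` of the left side of Abel's identity
`∑ⱼ C(n,j) x (x + n - j)^(n-j-1) (X + j)^j = (x + X + n)^n`. -/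
noncomputable def abelPoly (R : Type*) [CommSemiring R] (n : ℕ) : R[X] :=
  ∑ j ∈ range n, ((n.choose j * (n - j) ^ (n - j - 1) : ℕ) : R[X]) * (X + (j : R[X])) ^ j

theorem derivative_abelPoly_succ (n : ℕ) :
    derivative (abelPoly R (n + 1)) = (n + 1 : R[X]) * (abelPoly R n).comp (X + 1) := by
  rw [abelPoly, abelPoly, derivative_sum, sum_range_succ', Polynomial.sum_comp, mul_sum]
  simp only [derivative_mul, derivative_natCast, zero_mul, zero_add, pow_zero,
    add_zero, derivative_pow, derivative_add, derivative_X, mul_one, C_eq_natCast]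
  refine sum_congr rfl fun i hi => ?_
  have hchoose : ((n + 1).choose (i + 1) : R[X]) * (i + 1) = (n + 1) * n.choose i := by
    simpa using congrArg (Nat.cast : ℕ → R[X]) (Nat.add_one_mul_choose_eq n i).symm
  simp only [mul_comp, pow_comp, add_comp, X_comp, natCast_comp, Nat.add_sub_cancel,
    show n + 1 - (i + 1) = n - i by omega]
  push_cast
  linear_combination ((n - i : ℕ) : R[X]) ^ (n - i - 1) * (X + 1 + (i : R[X])) ^ i * hchoose

theorem eval_neg_abelPoly_add_two (n : ℕ) :
    eval (-(n + 2 : R)) (abelPoly R (n + 2)) = 0 := by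
  have hfin := alternating_sum_choose_mul_pow_eq_zero (R := R) (Nat.lt_succ_self (n + 1))
  rw [sum_range_succ, Nat.sub_self, Nat.cast_zero, zero_pow n.succ_ne_zero, mul_zero,
    add_zero] at hfin
  rw [abelPoly, eval_finsetSum, ← hfin]
  refine sum_congr rfl fun j hj => ?_
  have hj : j < n + 2 := mem_range.mp hj
  have hbase : -(n + 2 : R) + j = -((n + 2 - j : ℕ) : R) := by
    rw [Nat.cast_sub hj.le]; push_cast; ring
  have hpow : ((n + 2 - j : ℕ) : R) ^ (n + 1)
      = ((n + 2 - j : ℕ) : R) ^ (n + 2 - j - 1) * ((n + 2 - j : ℕ) : R) ^ j := by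
    rw [← pow_add]; congr 1; omega
  simp only [eval_mul, eval_natCast, eval_pow, eval_add, eval_X]
  rw [hbase, neg_pow, Nat.succ_eq_add_one, hpow]
  simp only [Nat.cast_mul, Nat.cast_pow]
  ring

theorem abelPoly_eq [IsAddTorsionFree R] (n : ℕ) :
    abelPoly R n = (n : R[X]) * (X + (n : R[X])) ^ (n - 1) := by
  induction n with
  | zero => simp [abelPoly]
  | succ n ih =>
    rcases n with _ | n
    · simp [abelPoly]
    -- Both sides have derivative `(n + 2) • (case n + 1) ∘ (X + 1)`, and both vanish at `-(n + 2)`.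
    set D := abelPoly R (n + 2) - ((n + 2 : ℕ) : R[X]) * (X + ((n + 2 : ℕ) : R[X])) ^ (n + 1)
    have hD : derivative D = 0 := by
      simp only [D, derivative_sub, derivative_abelPoly_succ, ih, derivative_mul,
        derivative_natCast, derivative_pow, derivative_add, derivative_X, C_eq_natCast,
        mul_comp, pow_comp, add_comp, X_comp, natCast_comp]
      push_cast
      ring
    have hD_eval : eval (-(n + 2 : R)) D = 0 := by
      have hroot : -(n + 2 : R) + ((n + 2 : ℕ) : R) = 0 := by push_cast; ring
      rw [eval_sub, eval_neg_abelPoly_add_two, eval_mul, eval_pow, eval_add, eval_X,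
        eval_natCast, hroot, zero_pow n.succ_ne_zero, mul_zero, sub_zero]
    rw [eq_C_of_derivative_eq_zero hD, eval_C] at hD_eval
    rw [← sub_eq_zero]
    change D = 0
    rw [eq_C_of_derivative_eq_zero hD, hD_eval, map_zero]

end Abel

open PowerSeries

namespace PowerSeries

section CommSemiring

variable {R : Type*} [CommSemiring R]

theorem coeff_X_mul_derivative (f : R⟦X⟧) (n : ℕ) :
    coeff n (X * d⁄dX R f) = n * coeff n f := by
  rcases n with _ | n
  · simp
  · rw [coeff_succ_X_mul, coeff_derivative, mul_comm]; push_cast; ring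

theorem coeff_coeff_mul (f g : R⟦X⟧⟦X⟧) (p q : ℕ) :
    coeff p (coeff q (f * g)) = ∑ x ∈ antidiagonal q, ∑ y ∈ antidiagonal p,
      coeff y.1 (coeff x.1 f) * coeff y.2 (coeff x.2 g) := by
  simp only [coeff_mul, map_sum]

end CommSemiring

variable {R : Type*} [CommRing R]

noncomputable def totalEuler : Derivation R R⟦X⟧⟦X⟧ R⟦X⟧⟦X⟧ :=
  Derivation.mk'
    { toFun := fun f => mk fun q => mk fun p => (p + q : R) * coeff p (coeff q f)
      map_add' := fun f g => by ext q p; simp [mul_add]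
      map_smul' := fun r f => by ext q p; simp [mul_left_comm] }
    fun f g => by
      ext q p
      simp only [LinearMap.coe_mk, AddHom.coe_mk, smul_eq_mul, map_add, coeff_mk]
      rw [mul_comm g, coeff_coeff_mul, coeff_coeff_mul, coeff_coeff_mul]
      simp only [coeff_mk, mul_sum, ← sum_add_distrib]
      refine sum_congr rfl fun x hx => sum_congr rfl fun y hy => ?_
      rw [HasAntidiagonal.mem_antidiagonal] at hx hy
      rw [← hx, ← hy]
      push_cast
      ring

theorem coeff_coeff_totalEuler (f : R⟦X⟧⟦X⟧) (p q : ℕ) :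
    coeff p (coeff q (totalEuler f)) = (p + q : R) * coeff p (coeff q f) := by
  simp [totalEuler]

theorem totalEuler_C (f : R⟦X⟧) : totalEuler (C f) = C (X * d⁄dX R f) := by
  ext q p
  rw [coeff_coeff_totalEuler, coeff_C, coeff_C]
  split_ifs with hq
  · rw [hq, coeff_X_mul_derivative]; simp
  · simp

theorem totalEuler_map_C (f : R⟦X⟧) : totalEuler (map C f) = map C (X * d⁄dX R f) := by
  ext q p
  rw [coeff_coeff_totalEuler, coeff_map, coeff_map, coeff_C, coeff_C, coeff_X_mul_derivative]
  split_ifs with hp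
  · rw [hp]; simp
  · simp

theorem totalEuler_X : totalEuler (X : R⟦X⟧⟦X⟧) = X := by
  simpa using totalEuler_map_C (X : R⟦X⟧)

theorem eq_zero_of_totalEuler_eq_smul_add_mul [IsDomain R] [CharZero R] {H ψ : R⟦X⟧⟦X⟧}
    {c : ℕ} (hψ : coeff 0 (coeff 0 ψ) = 0) (hE : totalEuler H = c • H + ψ * H)
    (hc : ∀ p q, p + q = c → coeff p (coeff q H) = 0) : H = 0 := by
  suffices ∀ d p q, p + q = d → coeff p (coeff q H) = 0 by ext q p; exact this _ p q rfl
  intro d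
  induction d using Nat.strong_induction_on with
  | _ d ih =>
  intro p q hpq
  have hmul : coeff p (coeff q (ψ * H)) = 0 := by
    rw [coeff_coeff_mul]
    refine sum_eq_zero fun x hx => sum_eq_zero fun y hy => ?_
    rw [HasAntidiagonal.mem_antidiagonal] at hx hy
    by_cases h0 : y.1 = 0 ∧ x.1 = 0
    · rw [h0.1, h0.2, hψ, zero_mul]
    · rw [ih (y.2 + x.2) (by omega) _ _ rfl, mul_zero]
  have key := congrArg (fun f => coeff p (coeff q f)) hE
  simp only [coeff_coeff_totalEuler, map_add, map_nsmul, hmul, add_zero] at key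
  rw [nsmul_eq_mul] at key
  by_cases hd : p + q = c
  · exact hc p q hd
  · have hne : (p + q : R) - c ≠ 0 := by
      rw [sub_ne_zero]; exact_mod_cast hd
    exact (mul_eq_zero.mp (by rw [sub_mul, key, sub_self])).resolve_left hne

end PowerSeries

/-- The tree series `w = V e^w`; the `if` avoids the junk value `0 ^ (0 - 1) = 1`. -/
noncomputable def treeSer : ℚ⟦X⟧ :=
  mk fun n => if n = 0 then 0 else (n : ℚ) ^ (n - 1) / n.factorial

theorem ySer_mul_treeSer : ySer * treeSer = ySer - 1 := by
  ext n
  rw [coeff_mul, Nat.sum_antidiagonal_eq_sum_range_succ_mk, sum_range_succ]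
  rcases n with _ | n
  · simp [ySer, treeSer]
  have habel := congrArg (Polynomial.eval 0) (abelPoly_eq (R := ℚ) (n + 1))
  simp only [abelPoly, Polynomial.eval_finsetSum, Polynomial.eval_mul, Polynomial.eval_natCast,
    Polynomial.eval_pow, Polynomial.eval_add, Polynomial.eval_X, zero_add] at habel
  have hT0 : coeff 0 treeSer = 0 := by simp [treeSer]
  have hy : coeff (n + 1) ySer
      = ((n + 1 : ℕ) : ℚ) * ((n + 1 : ℕ) : ℚ) ^ (n + 1 - 1) / (n + 1).factorial := by
    rw [Nat.add_sub_cancel, ← pow_succ']; simp [ySer]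
  simp only [Nat.sub_self, hT0, mul_zero, add_zero, map_sub, coeff_one, Nat.succ_ne_zero,
    if_false, sub_zero]
  rw [hy, ← habel, sum_div]
  refine sum_congr rfl fun j hj => ?_
  have hj' : n + 1 - j ≠ 0 := by have := mem_range.mp hj; omega
  simp only [ySer, treeSer, coeff_mk, if_neg hj', Nat.cast_mul, Nat.cast_pow,
    Nat.cast_choose ℚ (mem_range.mp hj).le]
  field_simp

theorem X_mul_derivative_treeSer : X * d⁄dX ℚ treeSer = ySer - 1 := by
  ext n
  rw [coeff_X_mul_derivative, map_sub, coeff_one]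
  rcases n with _ | n
  · simp [ySer, treeSer]
  · have hfact : ((n + 1).factorial : ℚ) ≠ 0 := by positivity
    simp [ySer, treeSer]
    field_simp
    ring

theorem X_mul_derivative_ySer : X * d⁄dX ℚ ySer = ySer ^ 2 * (ySer - 1) := by
  have hT := X_mul_derivative_treeSer
  have hyT := ySer_mul_treeSer
  have hd := congrArg (X * d⁄dX ℚ ·) hyT
  simp only [Derivation.leibniz, map_sub, Derivation.map_one_eq_zero, smul_eq_mul,
    sub_zero] at hd
  linear_combination (X * d⁄dX ℚ ySer) * hyT - ySer * hd + ySer ^ 2 * hT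

theorem totalEuler_V1 : totalEuler V1 = V1 := by
  simp [V1, totalEuler_C]

theorem totalEuler_yV1 : totalEuler yV1 = yV1 ^ 2 * (yV1 - 1) := by
  simp [yV1, totalEuler_C, X_mul_derivative_ySer]

theorem totalEuler_yV2 : totalEuler yV2 = yV2 ^ 2 * (yV2 - 1) := by
  simp [yV2, totalEuler_map_C, X_mul_derivative_ySer]

theorem totalEuler_Sser : totalEuler Sser = yV1 ^ 2 * (yV1 - 1) * (yV2 - 1) := by
  have hθ : yV1 ^ 2 * (yV1 - 1) = C (X * d⁄dX ℚ ySer) := by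
    simp [yV1, X_mul_derivative_ySer]
  rw [hθ]
  ext q p
  rw [coeff_coeff_totalEuler, coeff_C_mul, map_sub, yV2, coeff_map, coeff_one]
  rcases q with _ | q
  · simp [Sser, ySer]
  rcases p with _ | p
  · simp [Sser]
  have hpq : (p + 1 + (q + 1) : ℚ) ≠ 0 := by positivity
  rw [if_neg q.succ_ne_zero, sub_zero, coeff_mul_C, coeff_X_mul_derivative]
  simp [Sser, ySer]
  field_simp
  ring

noncomputable def convolutionDefect : PowerSeries (PowerSeries ℚ) :=
  Sser * (V2 - V1) * (yV2 - yV1) - (V2 * (yV2 - yV1) - yV1 ^ 2 * (yV2 - 1) * (V2 - V1))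

theorem totalEuler_convolutionDefect :
    totalEuler convolutionDefect = 2 • convolutionDefect +
      (yV1 ^ 2 + yV1 * yV2 + yV2 ^ 2 - yV1 - yV2 - 1) * convolutionDefect := by
  simp only [convolutionDefect, Derivation.leibniz, Derivation.leibniz_pow, map_sub,
    Derivation.map_one_eq_zero, smul_eq_mul, nsmul_eq_mul, totalEuler_Sser, totalEuler_V1,
    V2, totalEuler_X, totalEuler_yV1, totalEuler_yV2]
  ring

theorem coeff_coeff_convolutionDefect_of_add_eq_two {p q : ℕ} (h : p + q = 2) :
    coeff p (coeff q convolutionDefect) = 0 := by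
  obtain rfl : q = 2 - p := by omega
  have hp : p ≤ 2 := by omega
  interval_cases p <;>
    simp [convolutionDefect, Sser, V1, V2, yV1, yV2, ySer, coeff_X, coeff_C, coeff_one, sq,
      coeff_mul, Finset.Nat.antidiagonal_succ, -coeff_zero_eq_constantCoeff]

theorem convolutionDefect_eq_zero : convolutionDefect = 0 := by
  refine eq_zero_of_totalEuler_eq_smul_add_mul ?_ totalEuler_convolutionDefect
    fun _ _ => coeff_coeff_convolutionDefect_of_add_eq_two
  simp [yV1, yV2, ySer, sq, coeff_mul, -coeff_zero_eq_constantCoeff]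

/-- **convolution identity for tree-type series.**
`∑_{j,k≥1} (1/(j+k)) (j^{j+1}/j!) V_1^j (k^k/k!) V_2^k
  = V_2/(V_2-V_1) - y(V_1)² (y(V_2)-1)/(y(V_2)-y(V_1))`
as formal power series in `V_1, V_2`; since the right-hand side's combination is
a genuine power series, the identity is equivalently stated in the cleared form
`S · (V_2-V_1)(y(V_2)-y(V_1))
  = V_2 (y(V_2)-y(V_1)) - y(V_1)² (y(V_2)-1)(V_2-V_1)`
(the factors `V_2-V_1` and `y(V_2)-y(V_1)` being nonzero in the integral domain
`ℚ[[V_1,V_2]]`). -/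
theorem convolution_tree_identity :
    Sser * (V2 - V1) * (yV2 - yV1) =
      V2 * (yV2 - yV1) - yV1 ^ 2 * (yV2 - 1) * (V2 - V1) :=
  sub_eq_zero.mp convolutionDefect_eq_zero
end
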